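/- arXiv:1905.11819 — 5 statements merged into one kernel-verified Lean document; each statement's English description precedes it below -/
import Mathlib

section
/- Let d ≥ 2 and n ≥ 1, let ψ_1, …, ψ_n be unit vectors in ℂ^d, and let a_1, …, a_n be real numbers with 0 < a_i ≤ 1 such that ∑_{i=1}^n a_i |ψ_i⟩⟨ψ_i| = I_d (i.e., the rank-1 operators a_i|ψ_i⟩⟨ψ_i| form a POVM). Then there exist unitary d×d complex matrices C_1, …, C_{n−1} and real numbers α_1, …, α_{n−1} ∈ [0,1] such that, setting β_l = √(1 − α_l²), K_0 = I_d, and K_l = D_l · C_l · K_{l−1} for l = 1, …, n−1, where D_l is the d×d matrix D_l = e_0 e_1† + β_l · e_1 e_0† + ∑_{k=2}^{d−1} e_k e_k† (with e_j the standard basis vectors), the following hold for every j with 1 ≤ j ≤ n−1: (i) α_j² · K_{j−1}† C_j† (e_0 e_0†) C_j K_{j−1} = a_j |ψ_j⟩⟨ψ_j|, and (ii) K_j† K_j = I_d − ∑_{l=1}^{j} a_l |ψ_l⟩⟨ψ_l|; in particular K_{n−1}† K_{n−1} = a_n |ψ_n⟩⟨ψ_n|. (This is the algebraic content of the theorem that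 any rank-1 POVM with n outcomes on a qudit can be implemented by a one-dimensional discrete quantum walk with 2(n−1) steps.) -/
/-!
Write `Eₗ = aₗ ψₗ ψₗ†` and `Rⱼ = ∑_{l ≥ j} Eₗ`, so that `R₀ = I`. The walk is built one step at a
time, keeping the invariant `Kⱼ† Kⱼ = Rⱼ`. Since `Rⱼ - Eⱼ = Rⱼ₊₁ ≥ 0`, the vector `φ = √aⱼ ψⱼ`
lies in the range of `Kⱼ† Kⱼ`, say `Kⱼ† Kⱼ w = φ`; then `u = Kⱼ w` satisfies `Kⱼ† u = φ`, and
positivity of `Rⱼ₊₁` at `w` gives `‖u‖² = ⟨w, φ⟩ ≤ 1`. A unitary coin `Cⱼ` sending `u / ‖u‖` to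
`e₀` together with `αⱼ = ‖u‖` gives `αⱼ² Kⱼ† Cⱼ† e₀e₀† Cⱼ Kⱼ = φ φ† = Eⱼ`. As `Dⱼ` is the swap of
`e₀, e₁` composed with `diag(βⱼ, 1, …, 1)`, we have `Dⱼ† Dⱼ = I - αⱼ² e₀e₀†`, hence
`Kⱼ₊₁† Kⱼ₊₁ = Rⱼ - Eⱼ = Rⱼ₊₁`. Finally `Rₙ₋₁ = Eₙ₋₁`.
-/

open Matrix
open scoped ComplexOrder

section RCLike

variable {ι 𝕜 : Type*} [RCLike 𝕜]

theorem vecMulVec_sqrt_smul_self_star {a : ℝ} (ha : 0 ≤ a) (ψ : ι → 𝕜) :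
    vecMulVec ((√a : 𝕜) • ψ) (star ((√a : 𝕜) • ψ)) = (a : 𝕜) • vecMulVec ψ (star ψ) := by
  rw [star_smul, smul_vecMulVec, vecMulVec_smul, smul_smul, RCLike.star_def, RCLike.conj_ofReal,
    ← RCLike.ofReal_mul, Real.mul_self_sqrt ha]

variable [Fintype ι]

theorem Matrix.conjTranspose_mul_vecMulVec_mul {R : Type*} [CommSemiring R] [StarRing R]
    (N : Matrix ι ι R) (x : ι → R) :
    Nᴴ * vecMulVec x (star x) * N = vecMulVec (Nᴴ *ᵥ x) (star (Nᴴ *ᵥ x)) := by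
  rw [mul_vecMulVec, vecMulVec_mul, star_mulVec, conjTranspose_conjTranspose]

variable [DecidableEq ι]

theorem Matrix.exists_mulVec_eq_of_posSemidef_sub_vecMulVec {M : Matrix ι ι 𝕜} {φ : ι → 𝕜}
    (h : (M - vecMulVec φ (star φ)).PosSemidef) : ∃ w, M *ᵥ w = φ := by
  have hM : M.IsHermitian := by
    simpa using h.isHermitian.add (posSemidef_vecMulVec_self_star φ).isHermitian
  have hT := isSymmetric_toEuclideanLin_iff.mpr hM
  have hφ : WithLp.toLp 2 φ ∈ LinearMap.range (toEuclideanLin M) := by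
    rw [← Submodule.orthogonal_orthogonal (LinearMap.range _), hT.orthogonal_range]
    intro k hk
    have hMk : M *ᵥ k.ofLp = 0 := by simpa [toLpLin_apply] using hk
    have hk_nonneg := h.dotProduct_mulVec_nonneg k.ofLp
    rw [sub_mulVec, hMk, vecMulVec_mulVec, dotProduct_sub, dotProduct_zero, zero_sub,
      dotProduct_smul, op_smul_eq_mul, star_dotProduct, neg_nonneg] at hk_nonneg
    rw [EuclideanSpace.inner_eq_star_dotProduct, dotProduct_comm, star_dotProduct,
      star_eq_zero, ← CStarRing.star_mul_self_eq_zero_iff]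
    exact le_antisymm hk_nonneg (star_mul_self_nonneg _)
  obtain ⟨w, hw⟩ := hφ
  exact ⟨w.ofLp, by simpa [toLpLin_apply] using hw⟩

theorem Matrix.exists_mem_unitaryGroup_mulVec_single_eq {v : ι → 𝕜} (hv : star v ⬝ᵥ v = 1)
    (i : ι) : ∃ U ∈ unitaryGroup ι 𝕜, U *ᵥ Pi.single i 1 = v := by
  have hon : Orthonormal 𝕜 (({i} : Set ι).domRestrict fun _ => WithLp.toLp 2 v) := by
    rw [orthonormal_iff_ite]
    rintro ⟨j, rfl⟩ ⟨k, rfl⟩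
    rw [if_pos rfl]
    exact (EuclideanSpace.inner_toLp_toLp v v).trans ((dotProduct_comm _ _).trans hv)
  obtain ⟨b, hb⟩ := hon.exists_orthonormalBasis_extension_of_card_eq (by simp)
  refine ⟨(EuclideanSpace.basisFun ι 𝕜).toBasis.toMatrix b,
    (EuclideanSpace.basisFun ι 𝕜).toMatrix_orthonormalBasis_mem_unitary b, ?_⟩
  ext k
  simp [Module.Basis.toMatrix_apply, hb i rfl]

theorem Matrix.exists_coin_of_posSemidef_sub_vecMulVec {K : Matrix ι ι 𝕜} {φ : ι → 𝕜}
    (h : (Kᴴ * K - vecMulVec φ (star φ)).PosSemidef) (i : ι) :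
    ∃ C ∈ unitaryGroup ι 𝕜, ∃ α : ℝ, 0 ≤ α ∧ α ≤ 1 ∧
      ((α ^ 2 : ℝ) : 𝕜) • (Kᴴ * Cᴴ * single i i 1 * C * K) = vecMulVec φ (star φ) := by
  by_cases hφ : φ = 0
  · exact ⟨1, one_mem _, 0, le_rfl, zero_le_one, by simp [hφ]⟩
  -- `C` maps `Kw / ‖Kw‖` to `eᵢ`, where `Kᴴ K w = φ`, and `α = ‖Kw‖`.
  obtain ⟨w, hw⟩ := exists_mulVec_eq_of_posSemidef_sub_vecMulVec h
  set u := K *ᵥ w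
  set s := ‖WithLp.toLp 2 u‖
  have hKu : Kᴴ *ᵥ u = φ := by rw [mulVec_mulVec, hw]
  have hs : star u ⬝ᵥ u = (s : 𝕜) ^ 2 := by
    rw [dotProduct_comm, ← EuclideanSpace.inner_toLp_toLp, inner_self_eq_norm_sq_to_K]
  have hs_pos : 0 < s := by
    refine norm_pos_iff.mpr fun hu => hφ ?_
    rw [← hKu, show u = 0 from congrArg WithLp.ofLp hu, mulVec_zero]
  have hwφ : star w ⬝ᵥ φ = (s : 𝕜) ^ 2 := by
    rw [← hKu, dotProduct_mulVec, ← star_mulVec, hs]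
  have hs_le : s ≤ 1 := by
    have hw_nonneg := h.dotProduct_mulVec_nonneg w
    rw [sub_mulVec, vecMulVec_mulVec, dotProduct_sub, dotProduct_smul, op_smul_eq_mul,
      hw, hwφ, star_dotProduct, hwφ] at hw_nonneg
    have hs_sq : (0 : 𝕜) ≤ ((s ^ 2 - s ^ 2 * s ^ 2 : ℝ) : 𝕜) := by
      simpa [RCLike.star_def] using hw_nonneg
    rw [RCLike.ofReal_nonneg] at hs_sq
    nlinarith [pow_pos hs_pos 2, pow_pos hs_pos 3]
  set v := (s⁻¹ : 𝕜) • u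
  have hv : star v ⬝ᵥ v = 1 := by
    simp only [v, star_smul, smul_dotProduct, dotProduct_smul, hs, RCLike.star_def, map_inv₀,
      RCLike.conj_ofReal, smul_eq_mul]
    field_simp
  obtain ⟨U, hU, hUv⟩ := exists_mem_unitaryGroup_mulVec_single_eq hv i
  refine ⟨star U, Unitary.star_mem hU, s, hs_pos.le, hs_le, ?_⟩
  have hN : (Uᴴ * K)ᴴ *ᵥ Pi.single i 1 = (s⁻¹ : 𝕜) • φ := by
    rw [conjTranspose_mul, conjTranspose_conjTranspose, ← mulVec_mulVec, hUv, mulVec_smul, hKu]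
  calc ((s ^ 2 : ℝ) : 𝕜) • (Kᴴ * (star U)ᴴ * single i i 1 * star U * K)
      = ((s ^ 2 : ℝ) : 𝕜) • ((Uᴴ * K)ᴴ * vecMulVec (Pi.single i 1) (star (Pi.single i 1)) *
          (Uᴴ * K)) := by
        rw [single_eq_single_vecMulVec_single, star_eq_conjTranspose, conjTranspose_mul,
          conjTranspose_conjTranspose, ← Pi.single_star, star_one]
        simp only [Matrix.mul_assoc]
    _ = vecMulVec φ (star φ) := by
        rw [conjTranspose_mul_vecMulVec_mul, hN, star_smul, smul_vecMulVec, vecMulVec_smul,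
          smul_smul, smul_smul, RCLike.star_def, map_inv₀, RCLike.conj_ofReal]
        have hscalar : ((s ^ 2 : ℝ) : 𝕜) * (s : 𝕜)⁻¹ * (s : 𝕜)⁻¹ = 1 := by
          push_cast
          field_simp
        rw [hscalar, one_smul]

-- The last operator `Km` is part of the statement so that the induction can choose the next
-- coin before the sequence `K` is given.
theorem exists_walk_of_gram_steps (D : ℝ → Matrix ι ι 𝕜) (Q : ℕ → Matrix ι ι 𝕜) (hQ : Q 0 = 1)
    (m : ℕ) (hstep : ∀ j < m, ∀ K : Matrix ι ι 𝕜, Kᴴ * K = Q j →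
      ∃ C ∈ unitaryGroup ι 𝕜, ∃ α : ℝ, 0 ≤ α ∧ α ≤ 1 ∧
        (D α * C * K)ᴴ * (D α * C * K) = Q (j + 1)) :
    ∃ (C : ℕ → Matrix ι ι 𝕜) (α : ℕ → ℝ), (∀ l, C l ∈ unitaryGroup ι 𝕜 ∧ 0 ≤ α l ∧ α l ≤ 1) ∧
      ∃ Km : Matrix ι ι 𝕜, Kmᴴ * Km = Q m ∧ ∀ K : ℕ → Matrix ι ι 𝕜, K 0 = 1 →
        (∀ l < m, K (l + 1) = D (α l) * C l * K l) →
          K m = Km ∧ ∀ l ≤ m, (K l)ᴴ * K l = Q l := by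
  induction m with
  | zero =>
    refine ⟨fun _ => 1, fun _ => 0, fun _ => ⟨one_mem _, le_rfl, zero_le_one⟩, 1, by simp [hQ],
      fun K hK0 _ => ⟨hK0, fun l hl => ?_⟩⟩
    rw [Nat.le_zero.mp hl, hK0, hQ, conjTranspose_one, one_mul]
  | succ m ih =>
    obtain ⟨C, α, hCα, Km, hKm, hK⟩ := ih fun j hj => hstep j (Nat.lt_succ_of_lt hj)
    obtain ⟨C', hC', α', hα'₀, hα'₁, hgram⟩ := hstep m (Nat.lt_succ_self m) Km hKm
    refine ⟨Function.update C m C', Function.update α m α', fun l => ?_, _, hgram,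
      fun K hK0 hrec => ?_⟩
    · rcases eq_or_ne l m with rfl | hl
      · simpa using ⟨hC', hα'₀, hα'₁⟩
      · simpa [hl] using hCα l
    obtain ⟨hKm_eq, hgram_le⟩ := hK K hK0 fun l hl => by
      simpa [hl.ne] using hrec l (Nat.lt_succ_of_lt hl)
    have hK_succ : K (m + 1) = D α' * C' * Km := by
      simpa [hKm_eq] using hrec m (Nat.lt_succ_self m)
    refine ⟨hK_succ, fun l hl => ?_⟩
    rcases Nat.of_le_succ hl with hl | rfl
    · exact hgram_le l hl
    · rw [hK_succ, hgram]

end RCLike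

section tailSum

variable {M : Type*} {n : ℕ}

def tailSum [AddCommMonoid M] (f : Fin n → M) (j : ℕ) : M := ∑ l, if j ≤ l.1 then f l else 0

theorem tailSum_zero [AddCommMonoid M] (f : Fin n → M) : tailSum f 0 = ∑ l, f l := by
  simp [tailSum]

theorem tailSum_eq_add_tailSum_succ [AddCommMonoid M] (f : Fin n → M) {j : ℕ} (hj : j < n) :
    tailSum f j = f ⟨j, hj⟩ + tailSum f (j + 1) := by
  have hterm : ∀ l : Fin n, (if j ≤ l.1 then f l else 0) =
      (if ⟨j, hj⟩ = l then f l else 0) + if j + 1 ≤ l.1 then f l else 0 := fun l => by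
    rcases eq_or_ne ⟨j, hj⟩ l with rfl | hl
    · simp
    · have hlj : l.1 ≠ j := fun h => hl (Fin.ext h.symm)
      simp only [hl, if_false, zero_add]
      split_ifs <;> first | rfl | omega
  simp only [tailSum, hterm, Finset.sum_add_distrib, Finset.sum_ite_eq, Finset.mem_univ, if_true]

theorem tailSum_of_le [AddCommMonoid M] (f : Fin n → M) {j : ℕ} (hj : n ≤ j) : tailSum f j = 0 :=
  Finset.sum_eq_zero fun l _ => if_neg (by omega)

theorem sum_eq_sum_le_add_tailSum [AddCommMonoid M] (f : Fin n → M) (j : ℕ) :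
    ∑ l, f l = (∑ l : Fin n, if l.1 ≤ j then f l else 0) + tailSum f (j + 1) := by
  rw [tailSum, ← Finset.sum_add_distrib]
  exact Finset.sum_congr rfl fun l _ => by split_ifs <;> first | omega | simp

end tailSum

variable {d : ℕ}

noncomputable def walkShift (hd : 2 ≤ d) (α : ℝ) : Matrix (Fin d) (Fin d) ℂ :=
  Matrix.single (⟨0, by omega⟩ : Fin d) (⟨1, by omega⟩ : Fin d) (1 : ℂ)
    + ((Real.sqrt (1 - α ^ 2) : ℝ) : ℂ) •
        Matrix.single (⟨1, by omega⟩ : Fin d) (⟨0, by omega⟩ : Fin d) (1 : ℂ)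
    + ∑ k : Fin d, if 2 ≤ k.1 then Matrix.single k k (1 : ℂ) else 0

theorem walkShift_apply (hd : 2 ≤ d) (α : ℝ) (i j : Fin d) :
    walkShift hd α i j =
      if i = Equiv.swap ⟨0, by omega⟩ ⟨1, by omega⟩ j then
        (if j.1 = 0 then ((Real.sqrt (1 - α ^ 2) : ℝ) : ℂ) else 1)
      else 0 := by
  have htail : (∑ k : Fin d, if 2 ≤ k.1 then single k k (1 : ℂ) else 0) =
      diagonal fun k => if 2 ≤ k.1 then 1 else 0 := by
    rw [← sum_single_eq_diagonal]
    exact Finset.sum_congr rfl fun k _ => by split_ifs <;> simp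
  simp only [walkShift, htail, Matrix.add_apply, Matrix.smul_apply, diagonal_apply,
    single_apply, Equiv.swap_apply_def, Fin.ext_iff, apply_ite Fin.val]
  split_ifs <;> first | omega | simp

theorem walkShift_conjTranspose_mul_self (hd : 2 ≤ d) {α : ℝ} (hα : α ^ 2 ≤ 1) :
    (walkShift hd α)ᴴ * walkShift hd α =
      1 - ((α ^ 2 : ℝ) : ℂ) • single ⟨0, by omega⟩ ⟨0, by omega⟩ 1 := by
  ext p q
  have hβ : ((√(1 - α ^ 2) : ℝ) : ℂ) * (√(1 - α ^ 2) : ℝ) = 1 - (α : ℂ) ^ 2 := by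
    rw [← Complex.ofReal_mul, Real.mul_self_sqrt (by linarith)]
    push_cast
    ring
  simp only [mul_apply, conjTranspose_apply, walkShift_apply, apply_ite star, star_zero, ite_mul,
    zero_mul, mul_ite, mul_zero, Finset.sum_ite_eq', Finset.mem_univ, if_true,
    (Equiv.injective _).eq_iff, Matrix.sub_apply, one_apply, Matrix.smul_apply, single_apply]
  rcases eq_or_ne q p with rfl | hqp
  · by_cases hq : q.1 = 0
    · simp [hq, hβ, Fin.ext_iff]
    · simp [hq, Fin.ext_iff, Ne.symm hq]
  · have h00 : ¬((⟨0, by omega⟩ : Fin d) = p ∧ (⟨0, by omega⟩ : Fin d) = q) := fun h =>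
      hqp (h.2.symm.trans h.1)
    simp [hqp, Ne.symm hqp, h00]

theorem conjTranspose_mul_self_walkShift_mul_mul (hd : 2 ≤ d) {α : ℝ} (hα : α ^ 2 ≤ 1)
    {C : Matrix (Fin d) (Fin d) ℂ} (hC : C ∈ unitaryGroup (Fin d) ℂ)
    (K : Matrix (Fin d) (Fin d) ℂ) :
    (walkShift hd α * C * K)ᴴ * (walkShift hd α * C * K) =
      Kᴴ * K - ((α ^ 2 : ℝ) : ℂ) • (Kᴴ * Cᴴ * single ⟨0, by omega⟩ ⟨0, by omega⟩ 1 * C * K) := by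
  have hCC : Cᴴ * C = 1 := (mem_unitaryGroup_iff' (A := C)).mp hC
  calc (walkShift hd α * C * K)ᴴ * (walkShift hd α * C * K)
      = Kᴴ * Cᴴ * ((walkShift hd α)ᴴ * walkShift hd α) * C * K := by
        simp only [conjTranspose_mul, Matrix.mul_assoc]
    _ = _ := by
        rw [walkShift_conjTranspose_mul_self hd hα, Matrix.mul_sub, Matrix.sub_mul, Matrix.sub_mul,
          Matrix.mul_one, Matrix.mul_assoc Kᴴ Cᴴ C, hCC, Matrix.mul_one, Matrix.mul_smul,
          Matrix.smul_mul, Matrix.smul_mul]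

theorem exists_walk_step_of_tailSum (hd : 2 ≤ d) {n : ℕ} (ψ : Fin n → Fin d → ℂ)
    {a : Fin n → ℝ} (ha : ∀ i, 0 ≤ a i) {j : ℕ} (hj : j < n) {K : Matrix (Fin d) (Fin d) ℂ}
    (hK : Kᴴ * K = tailSum (fun l => (a l : ℂ) • vecMulVec (ψ l) (star (ψ l))) j) :
    ∃ C ∈ unitaryGroup (Fin d) ℂ, ∃ α : ℝ, 0 ≤ α ∧ α ≤ 1 ∧
      (walkShift hd α * C * K)ᴴ * (walkShift hd α * C * K) =
        tailSum (fun l => (a l : ℂ) • vecMulVec (ψ l) (star (ψ l))) (j + 1) := by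
  set E : Fin n → Matrix (Fin d) (Fin d) ℂ := fun l => (a l : ℂ) • vecMulVec (ψ l) (star (ψ l))
  set φ := ((√(a ⟨j, hj⟩) : ℝ) : ℂ) • ψ ⟨j, hj⟩
  have hφ : vecMulVec φ (star φ) = E ⟨j, hj⟩ := vecMulVec_sqrt_smul_self_star (ha _) _
  have hsplit : Kᴴ * K = E ⟨j, hj⟩ + tailSum E (j + 1) :=
    hK.trans (tailSum_eq_add_tailSum_succ E hj)
  have hpsd : (Kᴴ * K - vecMulVec φ (star φ)).PosSemidef := by
    rw [hφ, hsplit, add_sub_cancel_left]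
    refine posSemidef_sum _ fun l _ => ?_
    split_ifs
    exacts [(posSemidef_vecMulVec_self_star _).smul (Complex.zero_le_real.mpr (ha l)), .zero]
  obtain ⟨C, hC, α, hα₀, hα₁, hcoin⟩ :=
    exists_coin_of_posSemidef_sub_vecMulVec hpsd (⟨0, by omega⟩ : Fin d)
  -- `hcoin` casts through `RCLike.ofReal`; restated with `Complex.ofReal` so that `rw` can use it.
  have hcoin' : ((α ^ 2 : ℝ) : ℂ) • (Kᴴ * Cᴴ * single ⟨0, by omega⟩ ⟨0, by omega⟩ 1 * C * K) =
      E ⟨j, hj⟩ := hcoin.trans hφ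
  refine ⟨C, hC, α, hα₀, hα₁, ?_⟩
  rw [conjTranspose_mul_self_walkShift_mul_mul hd (by nlinarith) hC, hcoin', hsplit,
    add_sub_cancel_left]

/-- Any rank-1 POVM with `n` outcomes on a qudit (dimension `d`) can be implemented by a
one-dimensional discrete quantum walk with `2(n-1)` steps: algebraic content.  Here `K` is the
recursively defined Kraus-type operator sequence, `C l` are the unitary coin operators,
and `α l ∈ [0,1]` the coin parameters. -/
theorem povm_implementation_via_quantum_walk
    (d n : ℕ) (hd : 2 ≤ d) (hn : 1 ≤ n)
    (ψ : Fin n → (Fin d → ℂ))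
    (a : Fin n → ℝ) (ha : ∀ i, 0 < a i ∧ a i ≤ 1)
    (hsum : ∑ i, ((a i : ℝ) : ℂ) • vecMulVec (ψ i) (star (ψ i)) = 1) :
    ∃ (C : Fin (n - 1) → Matrix (Fin d) (Fin d) ℂ) (α : Fin (n - 1) → ℝ),
      (∀ l, C l ∈ Matrix.unitaryGroup (Fin d) ℂ) ∧
      (∀ l, 0 ≤ α l ∧ α l ≤ 1) ∧
      (∀ K : ℕ → Matrix (Fin d) (Fin d) ℂ,
        K 0 = 1 →
        (∀ l : Fin (n - 1),
          K (l.1 + 1) =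
            (Matrix.single (⟨0, by omega⟩ : Fin d) (⟨1, by omega⟩ : Fin d) (1 : ℂ)
              + ((Real.sqrt (1 - α l ^ 2) : ℝ) : ℂ) •
                  Matrix.single (⟨1, by omega⟩ : Fin d) (⟨0, by omega⟩ : Fin d) (1 : ℂ)
              + ∑ k : Fin d, if 2 ≤ k.1 then Matrix.single k k (1 : ℂ) else 0)
              * C l * K l.1) →
        (∀ j : Fin (n - 1),
          (((α j ^ 2 : ℝ)) : ℂ) •
              ((K j.1)ᴴ * (C j)ᴴ *
                Matrix.single (⟨0, by omega⟩ : Fin d) (⟨0, by omega⟩ : Fin d) (1 : ℂ)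
                * C j * K j.1)
            = ((a ⟨j.1, by omega⟩ : ℝ) : ℂ) •
                vecMulVec (ψ ⟨j.1, by omega⟩) (star (ψ ⟨j.1, by omega⟩)) ∧
          (K (j.1 + 1))ᴴ * K (j.1 + 1)
            = 1 - ∑ l : Fin n, (if l.1 ≤ j.1 then
                ((a l : ℝ) : ℂ) • vecMulVec (ψ l) (star (ψ l)) else 0)) ∧
        (K (n - 1))ᴴ * K (n - 1)
          = ((a ⟨n - 1, by omega⟩ : ℝ) : ℂ) •
              vecMulVec (ψ ⟨n - 1, by omega⟩) (star (ψ ⟨n - 1, by omega⟩))) := by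
  set E : Fin n → Matrix (Fin d) (Fin d) ℂ :=
    fun l => ((a l : ℝ) : ℂ) • vecMulVec (ψ l) (star (ψ l))
  obtain ⟨C, α, hCα, _, _, hwalk⟩ := exists_walk_of_gram_steps (walkShift hd) (tailSum E)
    (by rw [tailSum_zero, hsum]) (n - 1) fun j hj K hK =>
      exists_walk_step_of_tailSum hd ψ (fun i => (ha i).1.le) (by omega) hK
  refine ⟨fun l => C l, fun l => α l, fun l => (hCα l).1, fun l => (hCα l).2, fun K hK0 hrec => ?_⟩
  have hrec' : ∀ l : Fin (n - 1), K (l + 1) = walkShift hd (α l) * C l * K l := hrec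
  obtain ⟨-, hgram⟩ := hwalk K hK0 fun l hl => hrec' ⟨l, hl⟩
  refine ⟨fun j => ⟨?_, ?_⟩, ?_⟩
  · have hstep :=
      conjTranspose_mul_self_walkShift_mul_mul hd (by nlinarith [hCα j]) (hCα j).1 (K j)
    rw [← hrec' j, hgram _ j.2, hgram _ j.2.le, tailSum_eq_add_tailSum_succ E (j := j) (by omega),
      eq_sub_iff_add_eq, add_comm, add_left_inj] at hstep
    exact hstep
  · rw [hgram _ j.2, ← hsum, sum_eq_sum_le_add_tailSum E j, add_sub_cancel_left]
  · rw [hgram _ le_rfl, tailSum_eq_add_tailSum_succ E (by omega), tailSum_of_le E (by omega),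
      add_zero]
end

section
/- Let K be a d×d complex matrix, let ψ ∈ ℂ^d be a unit vector, and let a > 0 be a real number such that a·|ψ⟩⟨ψ| ≤ K† K in the Loewner order. Then there exists χ ∈ ℂ^d with K† χ = ψ and a·‖χ‖² ≤ 1. (This guarantees that the coin-operator parameter α′ = √a·‖K^{†+}ψ‖ of the quantum-walk algorithm satisfies α′ ≤ 1, so the coin operator is well defined.) -/
open Matrix
open scoped ComplexOrder InnerProductSpace

/-!
The Loewner inequality says `a ‖⟪ψ, x⟫‖² ≤ ‖K x‖²` for all `x`. Hence `ψ` is orthogonal to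
`ker K`, so `ψ = K† K v` for some `v`, since `K†` and `K† K` both have range `(ker K)ᗮ`.
For `χ = K v` we get `K† χ = ψ` and `‖χ‖² = ⟪ψ, v⟫`, so the inequality at `x = v` reads
`a ‖χ‖⁴ ≤ ‖χ‖²`.
-/

namespace LinearMap

variable {𝕜 E F : Type*} [RCLike 𝕜]
  [NormedAddCommGroup E] [InnerProductSpace 𝕜 E]
  [NormedAddCommGroup F] [InnerProductSpace 𝕜 F]

lemma mem_orthogonal_ker_of_mul_norm_inner_sq_le {T : E →ₗ[𝕜] F} {ψ : E} {a : ℝ} (ha : 0 < a)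
    (h : ∀ x, a * ‖⟪ψ, x⟫_𝕜‖ ^ 2 ≤ ‖T x‖ ^ 2) : ψ ∈ (ker T)ᗮ := by
  refine (Submodule.mem_orthogonal' _ _).2 fun x hx => ?_
  have hψx := h x
  rw [mem_ker.1 hx, norm_zero, zero_pow two_ne_zero] at hψx
  have : ‖⟪ψ, x⟫_𝕜‖ ^ 2 = 0 := le_antisymm (nonpos_of_mul_nonpos_right hψx ha) (by positivity)
  simpa using this

variable [FiniteDimensional 𝕜 E] [FiniteDimensional 𝕜 F]

lemma mul_norm_inner_sq_le_of_smul_rankOne_le {T : E →ₗ[𝕜] F} {ψ : E} {a : ℝ}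
    (h : (a : 𝕜) • (InnerProductSpace.rankOne 𝕜 ψ ψ : E →ₗ[𝕜] E) ≤ T.adjoint ∘ₗ T) (x : E) :
    a * ‖⟪ψ, x⟫_𝕜‖ ^ 2 ≤ ‖T x‖ ^ 2 := by
  have := h.re_inner_nonneg_right x
  rwa [sub_apply, inner_sub_right, comp_apply, adjoint_inner_right, smul_apply,
    ContinuousLinearMap.coe_coe, InnerProductSpace.rankOne_apply, inner_smul_right,
    inner_smul_right, ← inner_conj_symm x ψ, RCLike.mul_conj, inner_self_eq_norm_sq_to_K,
    ← RCLike.ofReal_pow, ← RCLike.ofReal_pow, ← RCLike.ofReal_mul, ← RCLike.ofReal_sub,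
    RCLike.ofReal_re, sub_nonneg] at this

theorem exists_adjoint_apply_eq_and_mul_norm_sq_le_one {T : E →ₗ[𝕜] F} {ψ : E} {a : ℝ}
    (ha : 0 < a)
    (h : (a : 𝕜) • (InnerProductSpace.rankOne 𝕜 ψ ψ : E →ₗ[𝕜] E) ≤ T.adjoint ∘ₗ T) :
    ∃ χ, T.adjoint χ = ψ ∧ a * ‖χ‖ ^ 2 ≤ 1 := by
  have hψ : ψ ∈ (T.adjoint ∘ₗ T).range := by
    rw [range_adjoint_comp_self, ← orthogonal_ker]
    exact mem_orthogonal_ker_of_mul_norm_inner_sq_le ha (mul_norm_inner_sq_le_of_smul_rankOne_le h)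
  obtain ⟨v, hv⟩ := hψ
  refine ⟨T v, hv, ?_⟩
  have hnorm : ‖⟪ψ, v⟫_𝕜‖ = ‖T v‖ ^ 2 := by
    rw [← hv, comp_apply, adjoint_inner_left, inner_self_eq_norm_sq_to_K, norm_pow,
      RCLike.norm_ofReal, abs_norm]
  have key := mul_norm_inner_sq_le_of_smul_rankOne_le h v
  rw [hnorm] at key
  rcases (sq_nonneg ‖T v‖).eq_or_lt with hzero | hpos
  · rw [← hzero, mul_zero]
    exact zero_le_one
  · nlinarith

end LinearMap

namespace Matrix

variable {𝕜 m n : Type*} [RCLike 𝕜] [Fintype m] [Fintype n] [DecidableEq m] [DecidableEq n]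

lemma toEuclideanLin_conjTranspose_mul_self (K : Matrix m n 𝕜) :
    toEuclideanLin (Kᴴ * K) = (toEuclideanLin K).adjoint ∘ₗ toEuclideanLin K := by
  rw [← toEuclideanLin_conjTranspose_eq_adjoint]
  exact toLpLin_mul 2 2 2 Kᴴ K

lemma PosSemidef.smul_rankOne_le {K : Matrix m n 𝕜} {ψ : n → 𝕜} {c : 𝕜}
    (h : (Kᴴ * K - c • vecMulVec ψ (star ψ)).PosSemidef) :
    c • (InnerProductSpace.rankOne 𝕜 (WithLp.toLp 2 ψ) (WithLp.toLp 2 ψ) :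
      EuclideanSpace 𝕜 n →ₗ[𝕜] EuclideanSpace 𝕜 n) ≤
      (toEuclideanLin K).adjoint ∘ₗ toEuclideanLin K := by
  have hrankOne :=
    InnerProductSpace.symm_toEuclideanLin_rankOne (WithLp.toLp 2 ψ) (WithLp.toLp 2 ψ)
  rw [LinearEquiv.symm_apply_eq] at hrankOne
  rwa [← isPositive_toEuclideanLin_iff, map_sub, map_smul, toEuclideanLin_conjTranspose_mul_self,
    ← hrankOne] at h

end Matrix

theorem coin_parameter_well_defined_general
    (d : ℕ) (K : Matrix (Fin d) (Fin d) ℂ)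
    (ψ : Fin d → ℂ)
    (a : ℝ) (ha : 0 < a)
    (h : (Kᴴ * K - ((a : ℝ) : ℂ) • vecMulVec ψ (star ψ)).PosSemidef) :
    ∃ χ : Fin d → ℂ, Kᴴ.mulVec χ = ψ ∧ a * (∑ j, ‖χ j‖ ^ 2) ≤ 1 := by
  obtain ⟨χ, hχ, hnorm⟩ :=
    LinearMap.exists_adjoint_apply_eq_and_mul_norm_sq_le_one (T := toEuclideanLin K) ha
      h.smul_rankOne_le
  refine ⟨χ.ofLp, ?_, ?_⟩
  · rw [← toEuclideanLin_conjTranspose_eq_adjoint] at hχ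
    exact congrArg WithLp.ofLp hχ
  · rwa [← EuclideanSpace.norm_sq_eq]

/-- If `a|ψ⟩⟨ψ| ≤ K†K` in the Loewner order with `a > 0` and `ψ` a unit vector, then there is a
preimage `χ` of `ψ` under `K†` with `a‖χ‖² ≤ 1`; hence the coin parameter
`α' = √a · ‖K^{†+}ψ‖` satisfies `α' ≤ 1`. -/
theorem coin_parameter_well_defined
    (d : ℕ) (K : Matrix (Fin d) (Fin d) ℂ)
    (ψ : Fin d → ℂ) (hψ : ∑ j, ‖ψ j‖ ^ 2 = 1)
    (a : ℝ) (ha : 0 < a)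
    (h : (Kᴴ * K - ((a : ℝ) : ℂ) • vecMulVec ψ (star ψ)).PosSemidef) :
    ∃ χ : Fin d → ℂ, Kᴴ.mulVec χ = ψ ∧ a * (∑ j, ‖χ j‖ ^ 2) ≤ 1 :=
  coin_parameter_well_defined_general d K ψ a ha h
end

section
/- Let A and B be positive semidefinite d×d complex matrices such that B has rank 1 and the range of B is contained in the range of A. Then the set S = {a : ℝ | A − a·B is positive semidefinite} is nonempty and bounded above, its supremum a_max belongs to S (i.e., A − a_max·B is positive semidefinite), and rank(A − a_max·B) = rank(A) − 1. -/
/-!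
Write `B = v vᴴ` (a positive semidefinite matrix of rank one) and `v = A u` (the range
condition), and put `r = uᴴ A u > 0`. Cauchy–Schwarz for the semi-inner product `xᴴ A y` gives
`|vᴴ x|² = |uᴴ A x|² ≤ r · xᴴ A x`, with equality at `x = u`; hence `A - a B` is positive
semidefinite exactly when `a r ≤ 1`, and `a_max = r⁻¹`. Since
`(A - r⁻¹ B) x = A (x - r⁻¹ (uᴴ A x) u)`, the kernel of `A - r⁻¹ B` is `ker A ⊕ span {u}`,
so the rank drops by exactly one.
-/

open Matrix
open scoped ComplexOrder

theorem LinearMap.finrank_range_add_one_of_ker_eq_sup_span {K V W : Type*} [DivisionRing K]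
    [AddCommGroup V] [Module K V] [FiniteDimensional K V] [AddCommGroup W] [Module K W]
    {f g : V →ₗ[K] W} {u : V} (hu : u ∉ LinearMap.ker f)
    (h : LinearMap.ker g = LinearMap.ker f ⊔ Submodule.span K {u}) :
    Module.finrank K (LinearMap.range g) + 1 = Module.finrank K (LinearMap.range f) := by
  have hf := f.finrank_range_add_finrank_ker
  have hg := g.finrank_range_add_finrank_ker
  rw [h, Submodule.finrank_sup_span_singleton hu] at hg
  omega

namespace Matrix

variable {𝕜 : Type*} [RCLike 𝕜] {n : Type*} [Fintype n] {A B : Matrix n n 𝕜}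

theorem PosSemidef.exists_eq_vecMulVec_of_rank_eq_one (hB : B.PosSemidef) (hrank : B.rank = 1) :
    ∃ v : n → 𝕜, B = vecMulVec v (star v) := by
  classical
  obtain ⟨⟨i₀, _⟩, hi₀⟩ :=
    Fintype.card_eq_one_iff.mp (hB.isHermitian.rank_eq_card_non_zero_eigs ▸ hrank)
  have h_eig (i : n) (hi : i ≠ i₀) : hB.isHermitian.eigenvalues i = 0 := by
    by_contra h
    exact hi congr($(hi₀ ⟨i, h⟩).val)
  let s : n → 𝕜 := Pi.single i₀ (√(hB.isHermitian.eigenvalues i₀) : 𝕜)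
  have h_diag : diagonal (RCLike.ofReal ∘ hB.isHermitian.eigenvalues) = vecMulVec s (star s) := by
    ext i j
    rcases eq_or_ne i i₀ with rfl | hi
    · rcases eq_or_ne j i with rfl | hj
      · simp [s, vecMulVec_apply, ← RCLike.ofReal_mul, Real.mul_self_sqrt (hB.eigenvalues_nonneg _)]
      · simp [s, vecMulVec_apply, hj, Ne.symm hj]
    · simp [s, diagonal_apply, vecMulVec_apply, hi, h_eig i hi]
  refine ⟨(hB.isHermitian.eigenvectorUnitary : Matrix n n 𝕜) *ᵥ s, ?_⟩
  conv_lhs => rw [hB.isHermitian.spectral_theorem, Unitary.conjStarAlgAut_apply, h_diag]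
  rw [mul_vecMulVec, vecMulVec_mul, star_mulVec, star_eq_conjTranspose]

theorem self_mem_range_mulVecLin_vecMulVec_star (v : n → 𝕜) :
    v ∈ LinearMap.range (vecMulVec v (star v)).mulVecLin := by
  rcases eq_or_ne v 0 with rfl | hv
  · exact zero_mem _
  refine ⟨(star v ⬝ᵥ v)⁻¹ • v, ?_⟩
  rw [mulVecLin_apply, mulVec_smul, vecMulVec_mulVec, op_smul_eq_smul, smul_smul,
    inv_mul_cancel₀ (dotProduct_star_self_eq_zero.not.mpr hv), one_smul]

theorem PosSemidef.norm_dotProduct_mulVec_sq_le (hA : A.PosSemidef) (x y : n → 𝕜) :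
    ‖star x ⬝ᵥ A *ᵥ y‖ ^ 2 ≤ RCLike.re (star x ⬝ᵥ A *ᵥ x) * RCLike.re (star y ⬝ᵥ A *ᵥ y) := by
  let _ := A.toSeminormedAddCommGroup hA
  let _ := A.toInnerProductSpace hA
  have inner_eq (a b : n → 𝕜) : inner 𝕜 a b = star a ⬝ᵥ A *ᵥ b := dotProduct_comm _ _
  have h := inner_mul_inner_self_le (𝕜 := 𝕜) x y
  rw [norm_inner_symm y x, ← sq] at h
  simpa only [inner_eq] using h

theorem IsHermitian.posSemidef_iff_re_dotProduct_mulVec_nonneg (hA : A.IsHermitian) :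
    A.PosSemidef ↔ ∀ x, 0 ≤ RCLike.re (star x ⬝ᵥ A *ᵥ x) := by
  simp only [posSemidef_iff_dotProduct_mulVec, hA, true_and]
  exact forall_congr' fun x ↦ by
    simp only [RCLike.nonneg_iff (K := 𝕜), hA.im_star_dotProduct_mulVec_self, and_true]

theorem IsHermitian.star_mulVec_dotProduct (hA : A.IsHermitian) (u x : n → 𝕜) :
    star (A *ᵥ u) ⬝ᵥ x = star u ⬝ᵥ A *ᵥ x := by
  rw [star_mulVec, hA.eq, ← dotProduct_mulVec]

theorem IsHermitian.ofReal_re_dotProduct_mulVec (hA : A.IsHermitian) (x : n → 𝕜) :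
    (RCLike.re (star x ⬝ᵥ A *ᵥ x) : 𝕜) = star x ⬝ᵥ A *ᵥ x :=
  RCLike.ext (by simp) (by simp [hA.im_star_dotProduct_mulVec_self])

theorem PosSemidef.re_dotProduct_mulVec_pos (hA : A.PosSemidef) {u : n → 𝕜} (hu : A *ᵥ u ≠ 0) :
    0 < RCLike.re (star u ⬝ᵥ A *ᵥ u) := by
  refine (hA.re_dotProduct_nonneg u).lt_of_ne fun h ↦ hu ((hA.dotProduct_mulVec_zero_iff u).mp ?_)
  rw [← hA.isHermitian.ofReal_re_dotProduct_mulVec, ← h, RCLike.ofReal_zero]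

theorem re_dotProduct_sub_smul_vecMulVec_mulVec (A : Matrix n n 𝕜) (w x : n → 𝕜) (a : ℝ) :
    RCLike.re (star x ⬝ᵥ (A - a • vecMulVec w (star w)) *ᵥ x)
      = RCLike.re (star x ⬝ᵥ A *ᵥ x) - a * ‖star w ⬝ᵥ x‖ ^ 2 := by
  rw [sub_mulVec, smul_mulVec, vecMulVec_mulVec, op_smul_eq_smul, dotProduct_sub,
    dotProduct_smul, dotProduct_smul, star_dotProduct x w, smul_eq_mul, RCLike.star_def,
    RCLike.mul_conj, map_sub, RCLike.smul_re, ← RCLike.ofReal_pow, RCLike.ofReal_re]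

theorem PosSemidef.posSemidef_sub_smul_vecMulVec_iff (hA : A.PosSemidef) (u : n → 𝕜) (a : ℝ) :
    (A - a • vecMulVec (A *ᵥ u) (star (A *ᵥ u))).PosSemidef
      ↔ a * RCLike.re (star u ⬝ᵥ A *ᵥ u) ≤ 1 := by
  have h_herm : (A - a • vecMulVec (A *ᵥ u) (star (A *ᵥ u))).IsHermitian :=
    hA.isHermitian.sub ((posSemidef_vecMulVec_self_star _).isHermitian.smul (IsSelfAdjoint.all a))
  simp only [h_herm.posSemidef_iff_re_dotProduct_mulVec_nonneg,
    re_dotProduct_sub_smul_vecMulVec_mulVec, hA.isHermitian.star_mulVec_dotProduct]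
  set r := RCLike.re (star u ⬝ᵥ A *ᵥ u)
  have hr : 0 ≤ r := hA.re_dotProduct_nonneg u
  constructor
  · intro h
    have h_at_u := h u
    have h_norm : ‖star u ⬝ᵥ A *ᵥ u‖ = r := by
      simpa using congrArg RCLike.re (RCLike.norm_of_nonneg' (hA.dotProduct_mulVec_nonneg u))
    rw [h_norm] at h_at_u
    change 0 ≤ r - a * r ^ 2 at h_at_u
    by_contra! h_gt
    have hr_pos : 0 < r := hr.lt_of_ne fun h0 ↦ by rw [← h0] at h_gt; linarith
    nlinarith
  · intro ha x
    have h_cs := hA.norm_dotProduct_mulVec_sq_le u x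
    have h_nonneg := hA.re_dotProduct_nonneg x
    rcases le_or_gt a 0 with ha0 | ha0
    · nlinarith [sq_nonneg ‖star u ⬝ᵥ A *ᵥ x‖]
    · nlinarith

theorem IsHermitian.mulVec_sub_smul_vecMulVec (hA : A.IsHermitian) (u x : n → 𝕜) (a : ℝ) :
    (A - a • vecMulVec (A *ᵥ u) (star (A *ᵥ u))) *ᵥ x
      = A *ᵥ (x - (a • (star u ⬝ᵥ A *ᵥ x)) • u) := by
  rw [sub_mulVec, smul_mulVec, vecMulVec_mulVec, op_smul_eq_smul, hA.star_mulVec_dotProduct,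
    mulVec_sub, mulVec_smul, smul_assoc]

theorem IsHermitian.ker_sub_inv_smul_vecMulVec (hA : A.IsHermitian) {u : n → 𝕜}
    (hr : RCLike.re (star u ⬝ᵥ A *ᵥ u) ≠ 0) :
    LinearMap.ker
        (A - (RCLike.re (star u ⬝ᵥ A *ᵥ u))⁻¹ • vecMulVec (A *ᵥ u) (star (A *ᵥ u))).mulVecLin
      = LinearMap.ker A.mulVecLin ⊔ Submodule.span 𝕜 {u} := by
  set r := RCLike.re (star u ⬝ᵥ A *ᵥ u)
  apply le_antisymm
  · intro x hx
    rw [LinearMap.mem_ker, mulVecLin_apply, hA.mulVec_sub_smul_vecMulVec] at hx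
    exact Submodule.mem_sup.mpr
      ⟨_, hx, _, Submodule.smul_mem _ _ (Submodule.mem_span_singleton_self u), sub_add_cancel _ _⟩
  · rw [sup_le_iff, Submodule.span_singleton_le_iff_mem]
    refine ⟨fun x hx ↦ ?_, ?_⟩
    · rw [LinearMap.mem_ker, mulVecLin_apply] at hx ⊢
      rw [hA.mulVec_sub_smul_vecMulVec, hx, dotProduct_zero, smul_zero, zero_smul, sub_zero, hx]
    · have h_coeff : r⁻¹ • (star u ⬝ᵥ A *ᵥ u) = 1 := by
        rw [← hA.ofReal_re_dotProduct_mulVec, RCLike.real_smul_eq_coe_mul, ← RCLike.ofReal_mul,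
          inv_mul_cancel₀ hr, RCLike.ofReal_one]
      rw [LinearMap.mem_ker, mulVecLin_apply, hA.mulVec_sub_smul_vecMulVec, h_coeff, one_smul,
        sub_self, mulVec_zero]

theorem IsHermitian.rank_sub_inv_smul_vecMulVec_add_one (hA : A.IsHermitian) {u : n → 𝕜}
    (hr : RCLike.re (star u ⬝ᵥ A *ᵥ u) ≠ 0) :
    (A - (RCLike.re (star u ⬝ᵥ A *ᵥ u))⁻¹ • vecMulVec (A *ᵥ u) (star (A *ᵥ u))).rank + 1
      = A.rank :=
  LinearMap.finrank_range_add_one_of_ker_eq_sup_span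
    (fun hu ↦ hr (by rw [show A *ᵥ u = 0 from hu, dotProduct_zero, map_zero]))
    (hA.ker_sub_inv_smul_vecMulVec hr)

end Matrix

/-- Lemma 1 (existence part): for `A, B` PSD with `B` of rank 1 and `range B ⊆ range A`, the set
`S = {a : ℝ | A - a·B` is PSD`}` is nonempty and bounded above, its supremum `a_max` belongs
to `S`, and `rank (A - a_max·B) = rank A - 1`. -/
theorem loewner_rank_lemma_sup
    (d : ℕ) (A B : Matrix (Fin d) (Fin d) ℂ)
    (hA : A.PosSemidef) (hB : B.PosSemidef) (hrankB : B.rank = 1)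
    (hrange : LinearMap.range B.mulVecLin ≤ LinearMap.range A.mulVecLin) :
    {a : ℝ | (A - ((a : ℝ) : ℂ) • B).PosSemidef}.Nonempty ∧
    BddAbove {a : ℝ | (A - ((a : ℝ) : ℂ) • B).PosSemidef} ∧
    (A - ((sSup {a : ℝ | (A - ((a : ℝ) : ℂ) • B).PosSemidef} : ℝ) : ℂ) • B).PosSemidef ∧
    (A - ((sSup {a : ℝ | (A - ((a : ℝ) : ℂ) • B).PosSemidef} : ℝ) : ℂ) • B).rank
      = A.rank - 1 := by
  obtain ⟨v, rfl⟩ := hB.exists_eq_vecMulVec_of_rank_eq_one hrankB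
  obtain ⟨u, hu⟩ := hrange (self_mem_range_mulVecLin_vecMulVec_star v)
  rw [mulVecLin_apply] at hu
  subst hu
  have hr : 0 < RCLike.re (star u ⬝ᵥ A *ᵥ u) :=
    hA.re_dotProduct_mulVec_pos fun h ↦ by simp [h] at hrankB
  have h_set : {a : ℝ | (A - ((a : ℝ) : ℂ) • vecMulVec (A *ᵥ u) (star (A *ᵥ u))).PosSemidef}
      = Set.Iic (RCLike.re (star u ⬝ᵥ A *ᵥ u))⁻¹ := by
    ext a
    rw [Set.mem_ofPred_eq, Complex.coe_smul, hA.posSemidef_sub_smul_vecMulVec_iff, Set.mem_Iic,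
      ← one_div, le_div_iff₀ hr]
  rw [h_set, csSup_Iic, Complex.coe_smul]
  refine ⟨Set.nonempty_Iic, bddAbove_Iic,
    (hA.posSemidef_sub_smul_vecMulVec_iff u _).mpr (inv_mul_cancel₀ hr.ne').le, ?_⟩
  have h_rank := hA.isHermitian.rank_sub_inv_smul_vecMulVec_add_one hr.ne'
  omega
end

section
/- Let A and B be positive semidefinite d×d complex matrices such that B has rank 1 and the range of B is contained in the range of A, and let a_max be the supremum of the set {a : ℝ | A − a·B is positive semidefinite}. Then for every complex number a with a ≠ a_max (regarding a_max as a complex number), rank(A − a·B) = rank(A). -/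
/-!
If `(A - a • B) x = 0` with `B x ≠ 0`, then `a` is real and equals `a_max`. Testing
`A - s • B ⪰ 0` on `x` gives `s ≤ a`; conversely, as `B` has rank one, every `y` splits as
`z + t • x` with `B z = 0`, and since `x` lies in the kernel of the Hermitian matrix `A - a • B`,
`yᴴ (A - a • B) y = zᴴ A z ≥ 0`. So for `a ≠ a_max` the kernel of `A - a • B` lies in that of `A`.
The reverse inclusion holds because `range B ⊆ range A` forces `ker A ⊆ ker B` for Hermitian
matrices, and equal kernels give equal ranks.
-/

open Matrix
open scoped ComplexOrder

namespace Matrix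

open LinearMap

theorem rank_eq_rank_of_ker_mulVecLin_eq {K m m' n : Type*} [Field K] [Fintype n]
    {A : Matrix m n K} {B : Matrix m' n K} (h : ker A.mulVecLin = ker B.mulVecLin) :
    A.rank = B.rank := by
  have hA := finrank_range_add_finrank_ker A.mulVecLin
  have hB := finrank_range_add_finrank_ker B.mulVecLin
  rw [h] at hA
  unfold rank
  omega

theorem exists_mulVec_eq_smul_of_rank_eq_one {K m n : Type*} [Field K] [Fintype n]
    {B : Matrix m n K} (hB : B.rank = 1) {x : n → K} (hx : B *ᵥ x ≠ 0) (y : n → K) :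
    ∃ t : K, B *ᵥ y = t • B *ᵥ x := by
  obtain ⟨t, ht⟩ := (finrank_eq_one_iff_of_nonzero' (⟨B *ᵥ x, x, rfl⟩ : range B.mulVecLin)
    (Subtype.coe_ne_coe.mp hx)).mp hB ⟨B *ᵥ y, y, rfl⟩
  exact ⟨t, (congrArg Subtype.val ht).symm⟩

theorem IsHermitian.star_mulVec_dotProduct_s5 {R n : Type*} [CommSemiring R] [StarRing R]
    [Fintype n] {M : Matrix n n R} (hM : M.IsHermitian) (x y : n → R) :
    star (M *ᵥ x) ⬝ᵥ y = star x ⬝ᵥ M *ᵥ y := by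
  rw [star_mulVec, hM.eq, dotProduct_mulVec]

theorem IsHermitian.dotProduct_mulVec_add_of_mulVec_eq_zero {R n : Type*} [CommSemiring R]
    [StarRing R] [Fintype n] {M : Matrix n n R} (hM : M.IsHermitian) {w : n → R}
    (hw : M *ᵥ w = 0) (z : n → R) :
    star (z + w) ⬝ᵥ M *ᵥ (z + w) = star z ⬝ᵥ M *ᵥ z := by
  rw [mulVec_add, hw, add_zero, star_add, add_dotProduct, ← hM.star_mulVec_dotProduct_s5 w, hw,
    star_zero, zero_dotProduct, add_zero]

variable {𝕜 n : Type*} [RCLike 𝕜] [Fintype n] {A B : Matrix n n 𝕜} {x : n → 𝕜}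

theorem IsHermitian.ker_mulVecLin_le_of_range_le (hA : A.IsHermitian) (hB : B.IsHermitian)
    (h : range B.mulVecLin ≤ range A.mulVecLin) : ker A.mulVecLin ≤ ker B.mulVecLin := by
  intro x hx
  rw [mem_ker, mulVecLin_apply] at hx ⊢
  obtain ⟨u, hu⟩ := h ⟨B *ᵥ x, rfl⟩
  simp only [mulVecLin_apply] at hu
  rw [← dotProduct_star_self_eq_zero, hB.star_mulVec_dotProduct_s5, ← hu,
    ← hA.star_mulVec_dotProduct_s5, hx, star_zero, zero_dotProduct]

theorem PosSemidef.dotProduct_mulVec_pos (hB : B.PosSemidef) (hx : B *ᵥ x ≠ 0) :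
    0 < star x ⬝ᵥ B *ᵥ x :=
  (hB.dotProduct_mulVec_nonneg x).lt_of_ne' (mt (hB.dotProduct_mulVec_zero_iff x).mp hx)

theorem PosSemidef.nonneg_of_mulVec_eq_smul_mulVec (hA : A.PosSemidef) {a : 𝕜}
    (hx : A *ᵥ x = a • B *ᵥ x) (hBx : 0 < star x ⬝ᵥ B *ᵥ x) : 0 ≤ a := by
  obtain ⟨q, hq, hqx⟩ := RCLike.pos_iff_exists_ofReal.mp hBx
  have hAx := hA.dotProduct_mulVec_nonneg x
  rw [hx, dotProduct_smul, smul_eq_mul, ← hqx] at hAx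
  have hq' : (q : 𝕜) ≠ 0 := by exact_mod_cast hq.ne'
  calc (0 : 𝕜) ≤ a * q * ((q⁻¹ : ℝ) : 𝕜) :=
        mul_nonneg hAx (RCLike.ofReal_nonneg.mpr (inv_nonneg.mpr hq.le))
    _ = a := by push_cast; field_simp

theorem le_of_posSemidef_sub_smul {r s : ℝ} (hx : A *ᵥ x = (r : 𝕜) • B *ᵥ x)
    (hBx : 0 < star x ⬝ᵥ B *ᵥ x) (hs : (A - (s : 𝕜) • B).PosSemidef) : s ≤ r := by
  obtain ⟨q, hq, hqx⟩ := RCLike.pos_iff_exists_ofReal.mp hBx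
  have h := hs.dotProduct_mulVec_nonneg x
  rw [sub_mulVec, smul_mulVec, hx, ← sub_smul, dotProduct_smul, smul_eq_mul, ← hqx,
    ← RCLike.ofReal_sub, ← RCLike.ofReal_mul, RCLike.ofReal_nonneg] at h
  nlinarith

theorem PosSemidef.posSemidef_sub_smul_of_mulVec_eq (hA : A.PosSemidef) (hB : B.IsHermitian)
    {r : ℝ} (hx : A *ᵥ x = (r : 𝕜) • B *ᵥ x) (hspan : ∀ y, ∃ t : 𝕜, B *ᵥ y = t • B *ᵥ x) :
    (A - (r : 𝕜) • B).PosSemidef := by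
  have hM : (A - (r : 𝕜) • B).IsHermitian := by
    rw [← RCLike.real_smul_eq_coe_smul]
    exact hA.isHermitian.sub (hB.smul (IsSelfAdjoint.all r))
  have hMx : (A - (r : 𝕜) • B) *ᵥ x = 0 := by rw [sub_mulVec, smul_mulVec, hx, sub_self]
  refine .of_dotProduct_mulVec_nonneg hM fun y => ?_
  obtain ⟨t, ht⟩ := hspan y
  set z := y - t • x
  have hBz : B *ᵥ z = 0 := by rw [mulVec_sub, mulVec_smul, ht, sub_self]
  have hMz : (A - (r : 𝕜) • B) *ᵥ z = A *ᵥ z := by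
    rw [sub_mulVec, smul_mulVec, hBz, smul_zero, sub_zero]
  rw [← sub_add_cancel y (t • x),
    hM.dotProduct_mulVec_add_of_mulVec_eq_zero (by rw [mulVec_smul, hMx, smul_zero]), hMz]
  exact hA.dotProduct_mulVec_nonneg z

theorem PosSemidef.isGreatest_of_mulVec_eq_smul_mulVec (hA : A.PosSemidef) (hB : B.PosSemidef)
    (hrank : B.rank = 1) {r : ℝ} (hx : A *ᵥ x = (r : 𝕜) • B *ᵥ x) (hBx : B *ᵥ x ≠ 0) :
    IsGreatest {s : ℝ | (A - (s : 𝕜) • B).PosSemidef} r :=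
  ⟨hA.posSemidef_sub_smul_of_mulVec_eq hB.isHermitian hx
      (exists_mulVec_eq_smul_of_rank_eq_one hrank hBx),
    fun _ hs => le_of_posSemidef_sub_smul hx (hB.dotProduct_mulVec_pos hBx) hs⟩

theorem PosSemidef.ker_mulVecLin_sub_smul_eq (hA : A.PosSemidef) (hB : B.PosSemidef)
    (hrank : B.rank = 1) (hrange : range B.mulVecLin ≤ range A.mulVecLin) {a : 𝕜}
    (ha : a ≠ ((sSup {s : ℝ | (A - (s : 𝕜) • B).PosSemidef} : ℝ) : 𝕜)) :
    ker (A - a • B).mulVecLin = ker A.mulVecLin := by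
  refine le_antisymm (fun x hx => ?_) (fun x hx => ?_)
  · rw [mem_ker, mulVecLin_apply, sub_mulVec, smul_mulVec, sub_eq_zero] at hx
    by_cases hBx : B *ᵥ x = 0
    · rwa [hBx, smul_zero] at hx
    obtain ⟨r, -, rfl⟩ := RCLike.nonneg_iff_exists_ofReal.mp
      (hA.nonneg_of_mulVec_eq_smul_mulVec hx (hB.dotProduct_mulVec_pos hBx))
    exact absurd (by rw [(hA.isGreatest_of_mulVec_eq_smul_mulVec hB hrank hx hBx).csSup_eq]) ha
  · have hBx := hA.isHermitian.ker_mulVecLin_le_of_range_le hB.isHermitian hrange hx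
    rw [mem_ker, mulVecLin_apply] at hx hBx ⊢
    rw [sub_mulVec, smul_mulVec, hx, hBx, smul_zero, sub_zero]

end Matrix

/-- Lemma 1 (generic rank part): for `A, B` PSD with `B` of rank 1 and `range B ⊆ range A`, and
`a_max` the supremum of `{a : ℝ | A - a·B` is PSD`}`, every complex number `a ≠ a_max`
satisfies `rank (A - a·B) = rank A`. -/
theorem loewner_rank_lemma_generic
    (d : ℕ) (A B : Matrix (Fin d) (Fin d) ℂ)
    (hA : A.PosSemidef) (hB : B.PosSemidef) (hrankB : B.rank = 1)
    (hrange : LinearMap.range B.mulVecLin ≤ LinearMap.range A.mulVecLin) :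
    ∀ a : ℂ,
      a ≠ ((sSup {a' : ℝ | (A - ((a' : ℝ) : ℂ) • B).PosSemidef} : ℝ) : ℂ) →
      (A - a • B).rank = A.rank := fun _ ha =>
  rank_eq_rank_of_ker_mulVecLin_eq (hA.ker_mulVecLin_sub_smul_eq hB hrankB hrange ha)
end

section
/- Let A and B be positive semidefinite d×d complex matrices such that B has rank 1 and the range of B is contained in the range of A, and let a_max be the supremum of the set {a : ℝ | A − a·B is positive semidefinite}. If c is a real number such that A − c·B is positive semidefinite and rank(A − c·B) = rank(A) − 1, then c = a_max. -/
/-!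
The rank drop `rank (A - c • B) = rank A - 1` is strict, since `rank A ≥ rank B = 1`, so some
`x` has `A x = c B x` and `A x ≠ 0`, whence `x⋆ B x > 0`. Testing `A - a • B ≥ 0` against this
`x` gives `0 ≤ (c - a) x⋆ B x`, hence `a ≤ c`: `c` is the largest element of the set.
-/

open Matrix
open scoped ComplexOrder

namespace Matrix

section Field

variable {m m' n K : Type*} [Fintype n] [Field K]

theorem rank_le_rank_of_ker_mulVecLin_le {M : Matrix m n K} {N : Matrix m' n K}
    (h : LinearMap.ker M.mulVecLin ≤ LinearMap.ker N.mulVecLin) : N.rank ≤ M.rank := by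
  have hM := LinearMap.finrank_range_add_finrank_ker M.mulVecLin
  have hN := LinearMap.finrank_range_add_finrank_ker N.mulVecLin
  have hker := Submodule.finrank_mono h
  rw [Matrix.rank, Matrix.rank]
  omega

theorem exists_mulVec_eq_zero_and_ne_zero_of_rank_lt {M : Matrix m n K} {N : Matrix m' n K}
    (h : M.rank < N.rank) : ∃ x, M *ᵥ x = 0 ∧ N *ᵥ x ≠ 0 := by
  by_contra! hker
  exact h.not_ge (rank_le_rank_of_ker_mulVecLin_le fun x hx => hker x hx)

end Field

variable {n 𝕜 : Type*} [Fintype n] [RCLike 𝕜]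

theorem isGreatest_setOf_posSemidef_sub_smul {A B : Matrix n n 𝕜} {c : ℝ} {x : n → 𝕜}
    (hc : (A - (c : 𝕜) • B).PosSemidef) (hx : A *ᵥ x = (c : 𝕜) • B *ᵥ x)
    (hBx : 0 < star x ⬝ᵥ B *ᵥ x) :
    IsGreatest {a : ℝ | (A - (a : 𝕜) • B).PosSemidef} c := by
  refine ⟨hc, fun a ha => ?_⟩
  obtain ⟨β, hβ, hβx⟩ := RCLike.pos_iff_exists_ofReal.mp hBx
  have h := ha.dotProduct_mulVec_nonneg x
  rw [sub_mulVec, smul_mulVec, dotProduct_sub, hx, dotProduct_smul, dotProduct_smul, ← hβx,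
    smul_eq_mul, smul_eq_mul, ← sub_mul, ← RCLike.ofReal_sub, ← RCLike.ofReal_mul,
    RCLike.ofReal_nonneg] at h
  linarith [nonneg_of_mul_nonneg_left h hβ]

end Matrix

theorem loewner_rank_lemma_unique_general
    (d : ℕ) (A B : Matrix (Fin d) (Fin d) ℂ)
    (hB : B.PosSemidef) (hrankB : B.rank = 1)
    (hrange : LinearMap.range B.mulVecLin ≤ LinearMap.range A.mulVecLin)
    (c : ℝ) (hc : (A - ((c : ℝ) : ℂ) • B).PosSemidef)
    (hrank : (A - ((c : ℝ) : ℂ) • B).rank = A.rank - 1) :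
    c = sSup {a : ℝ | (A - ((a : ℝ) : ℂ) • B).PosSemidef} := by
  have hrankA : 1 ≤ A.rank := hrankB ▸ Submodule.finrank_mono hrange
  obtain ⟨x, hMx, hAx⟩ := exists_mulVec_eq_zero_and_ne_zero_of_rank_lt
    (M := A - ((c : ℝ) : ℂ) • B) (N := A) (by omega)
  have hx : A *ᵥ x = ((c : ℝ) : ℂ) • B *ᵥ x := by
    rwa [sub_mulVec, smul_mulVec, sub_eq_zero] at hMx
  have hBx : 0 < star x ⬝ᵥ B *ᵥ x := by
    refine (hB.dotProduct_mulVec_nonneg x).lt_of_ne' fun h => hAx ?_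
    rw [hx, (hB.dotProduct_mulVec_zero_iff x).mp h, smul_zero]
  exact (isGreatest_setOf_posSemidef_sub_smul hc hx hBx).csSup_eq.symm

/-- Lemma 1 (uniqueness part): for `A, B` PSD with `B` of rank 1 and `range B ⊆ range A`, if
`c : ℝ` is such that `A - c·B` is PSD and `rank (A - c·B) = rank A - 1`, then `c` equals the
supremum of `{a : ℝ | A - a·B` is PSD`}`. -/
theorem loewner_rank_lemma_unique
    (d : ℕ) (A B : Matrix (Fin d) (Fin d) ℂ)
    (hA : A.PosSemidef) (hB : B.PosSemidef) (hrankB : B.rank = 1)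
    (hrange : LinearMap.range B.mulVecLin ≤ LinearMap.range A.mulVecLin)
    (c : ℝ) (hc : (A - ((c : ℝ) : ℂ) • B).PosSemidef)
    (hrank : (A - ((c : ℝ) : ℂ) • B).rank = A.rank - 1) :
    c = sSup {a : ℝ | (A - ((a : ℝ) : ℂ) • B).PosSemidef} :=
  loewner_rank_lemma_unique_general d A B hB hrankB hrange c hc hrank
end
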